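/- Let G be a second countable locally compact Hausdorff abelian group, H a countable uniform lattice in G, M a closed subgroup with H ⊆ M ⊆ G, Ω a measurable section of Γ/H*, and N a section of H*/M*. Set D = ⋃_{σ∈N}(Ω + σ). Then: (a) D is a measurable section of Γ/M*, i.e. D contains exactly one element of each coset of M* in Γ; and (b) the fiberization map F ↦ (δ ↦ (F(δ + m*))_{m*∈M*}) defines a surjective linear isometry from L²(Γ, m_Γ) onto L²(D, ℓ²(M*)), meaning there is a surjective linear isometry U : L²(Γ) → L²(D, ℓ²(M*); m_Γ restricted to D) such that for every F ∈ L²(Γ) with measurable representative f, for almost every δ ∈ D, (UF)(δ) is the sequence (f(δ + m*))_{m*∈M*} in ℓ²(M*). -/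

import Mathlib

/-!
`Ω * N` meets every coset of `M*` exactly once: `γ` is moved into `Ω` by an element of `H*`,
and what is left is moved into `N` modulo `M*`. As `H` is cocompact, `H*` is discrete in the
second countable group `Γ` (a character trivial on `H` and close to `1` on a compact `K` with
`K + H = G` is trivial), hence countable, and so is `M* ⊆ H*`. So `D` is a measurable fundamental
domain for the translation action of the countable group `M*`, and unfolding the integral over
the orbits gives `∫ |F|² = ∫_D ∑_{m ∈ M*} |F(m δ)|²`: the fiberization is an isometry into
`L²(D, ℓ²(M*))`. It is onto because a field `Φ` on `D` is reassembled as `F(x) = Φ(m x)(m⁻¹)`,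
with `m` the unique element moving `x` into `D`.
-/

open MeasureTheory Multiplicative

/-- `ModulateMem mΓ x F S` says that the modulation `E_x F`, `(E_x F)(γ) = (x,γ)·F(γ)`,
belongs to the set `S ⊆ L²(Γ)`, where `Γ` is the Pontryagin dual of `G`. -/
def ModulateMem {G : Type*} [AddCommGroup G] [TopologicalSpace G]
    [MeasurableSpace (PontryaginDual (Multiplicative G))]
    (mΓ : Measure (PontryaginDual (Multiplicative G))) (x : G)
    (F : Lp ℂ 2 mΓ) (S : Set (Lp ℂ 2 mΓ)) : Prop :=
  ∃ K ∈ S, (K : PontryaginDual (Multiplicative G) → ℂ) =ᵐ[mΓ]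
    fun γ => (γ (ofAdd x) : ℂ) * (F : PontryaginDual (Multiplicative G) → ℂ) γ

open Filter ENNReal
open scoped Pointwise

section lpEnorm

variable {ι : Type*} {E : ι → Type*} [∀ i, NormedAddCommGroup (E i)] {p : ℝ≥0∞}

theorem memℓp_iff_tsum_enorm_rpow_ne_top (hp : 0 < p.toReal) {f : ∀ i, E i} :
    Memℓp f p ↔ ∑' i, ‖f i‖ₑ ^ p.toReal ≠ ∞ := by
  have h (i : ι) : ‖f i‖ₑ ^ p.toReal = ((‖f i‖₊ ^ p.toReal : NNReal) : ℝ≥0∞) := by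
    rw [enorm_eq_nnnorm, ENNReal.coe_rpow_of_nonneg _ hp.le]
  simp_rw [h, ENNReal.tsum_coe_ne_top_iff_summable, ← NNReal.summable_coe, NNReal.coe_rpow,
    coe_nnnorm, memℓp_gen_iff hp]

theorem lp.enorm_rpow_eq_tsum [Fact (1 ≤ p)] (hp : 0 < p.toReal) (f : lp E p) :
    ‖f‖ₑ ^ p.toReal = ∑' i, ‖f i‖ₑ ^ p.toReal := by
  rw [← ofReal_norm, ENNReal.ofReal_rpow_of_nonneg (norm_nonneg _) hp.le,
    lp.norm_rpow_eq_tsum hp, ENNReal.ofReal_tsum_of_nonneg (fun i => by positivity)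
      ((memℓp_gen_iff hp).1 (lp.memℓp f))]
  refine tsum_congr fun i => ?_
  rw [← ofReal_norm, ENNReal.ofReal_rpow_of_nonneg (norm_nonneg _) hp.le]

end lpEnorm

theorem MeasureTheory.eLpNorm_two_rpow_eq_lintegral {α E : Type*} [MeasurableSpace α]
    [NormedAddCommGroup E] (f : α → E) (μ : Measure α) :
    eLpNorm f 2 μ ^ (2 : ℝ) = ∫⁻ x, ‖f x‖ₑ ^ (2 : ℝ) ∂μ := by
  simpa using eLpNorm_nnreal_pow_eq_lintegral (f := f) (μ := μ) (p := 2) two_ne_zero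

section Fiberization

variable {𝕜 E G α : Type*} [NormedField 𝕜] [NormedAddCommGroup E] [NormedSpace 𝕜 E]
  [Group G] [MulAction G α]

-- Where the orbit family is not square-summable the value is the junk `0`; for `f ∈ L²` this
-- happens only on a null subset of a fundamental domain (`ae_memℓp_orbit`).
variable (G) in
open Classical in
noncomputable def orbitFiber (f : α → E) (δ : α) : lp (fun _ : G => E) 2 :=
  if h : Memℓp (fun g : G => f (g • δ)) 2 then ⟨fun g => f (g • δ), h⟩ else 0

theorem coe_orbitFiber_of_memℓp {f : α → E} {δ : α} (h : Memℓp (fun g : G => f (g • δ)) 2) :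
    ⇑(orbitFiber G f δ) = fun g => f (g • δ) := by
  rw [orbitFiber, dif_pos h]

variable [MeasurableSpace α] [Countable G] [MeasurableConstSMul G α] {μ : Measure α}
  [SMulInvariantMeasure G α μ] {D : Set α}

theorem ae_forall_smul {P : α → Prop} (h : ∀ᵐ x ∂μ, P x) : ∀ᵐ x ∂μ, ∀ g : G, P (g • x) :=
  ae_all_iff.2 fun g => (measurePreserving_smul g μ).quasiMeasurePreserving.ae h

theorem orbitFiber_ae_eq_of_ae_eq {f f' : α → E} (h : f =ᵐ[μ] f') :
    orbitFiber G f =ᵐ[μ] orbitFiber G f' := by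
  filter_upwards [ae_forall_smul (G := G) h] with δ hδ
  have hfun : (fun g : G => f (g • δ)) = fun g => f' (g • δ) := funext hδ
  rw [orbitFiber, orbitFiber, hfun]

namespace MeasureTheory.IsFundamentalDomain

variable (hD : IsFundamentalDomain G D μ)
include hD

theorem lintegral_eq_setLIntegral_tsum {h : α → ℝ≥0∞} (hh : AEMeasurable h μ) :
    ∫⁻ x, h x ∂μ = ∫⁻ δ in D, ∑' g : G, h (g • δ) ∂μ := by
  rw [lintegral_tsum (f := fun g δ => h (g • δ)) fun g =>
    (hh.comp_quasiMeasurePreserving (measurePreserving_smul g μ).quasiMeasurePreserving).restrict]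
  exact hD.lintegral_eq_tsum'' h

theorem ae_memℓp_orbit {f : α → E} (hf : MemLp f 2 μ) :
    ∀ᵐ δ ∂μ.restrict D, Memℓp (fun g : G => f (g • δ)) 2 := by
  have hfin : ∫⁻ δ in D, ∑' g : G, ‖f (g • δ)‖ₑ ^ (2 : ℝ) ∂μ ≠ ∞ := by
    rw [← hD.lintegral_eq_setLIntegral_tsum (hf.1.enorm.pow_const (2 : ℝ)),
      ← eLpNorm_two_rpow_eq_lintegral]
    exact rpow_ne_top_of_nonneg zero_le_two hf.eLpNorm_ne_top
  have hmeas : AEMeasurable (fun δ => ∑' g : G, ‖f (g • δ)‖ₑ ^ (2 : ℝ)) (μ.restrict D) :=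
    AEMeasurable.tsum fun g => (hf.1.enorm.pow_const (2 : ℝ)).comp_quasiMeasurePreserving
      (measurePreserving_smul g μ).quasiMeasurePreserving |>.restrict
  filter_upwards [ae_lt_top' hmeas hfin] with δ hδ
  exact (memℓp_iff_tsum_enorm_rpow_ne_top (by norm_num)).2 (by simpa using hδ.ne)

theorem eLpNorm_eq_of_ae_apply_eq {f : α → E} (hf : AEStronglyMeasurable f μ)
    {φ : α → lp (fun _ : G => E) 2} (hφ : ∀ᵐ δ ∂μ.restrict D, ∀ g, φ δ g = f (g • δ)) :
    eLpNorm φ 2 (μ.restrict D) = eLpNorm f 2 μ := by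
  refine ENNReal.rpow_left_injective two_ne_zero ?_
  simp only [eLpNorm_two_rpow_eq_lintegral]
  rw [hD.lintegral_eq_setLIntegral_tsum (hf.enorm.pow_const (2 : ℝ))]
  refine lintegral_congr_ae (hφ.mono fun δ hδ => ?_)
  simpa [hδ] using lp.enorm_rpow_eq_tsum (p := 2) (by norm_num) (φ δ)

theorem eLpNorm_orbitFiber {f : α → E} (hf : MemLp f 2 μ) :
    eLpNorm (orbitFiber G f) 2 (μ.restrict D) = eLpNorm f 2 μ :=
  hD.eLpNorm_eq_of_ae_apply_eq hf.1 <| (hD.ae_memℓp_orbit hf).mono fun δ hδ g => by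
    rw [coe_orbitFiber_of_memℓp hδ]

theorem memLp_orbitFiber {f : α → E} (hf : MemLp f 2 μ) :
    MemLp (orbitFiber G f) 2 (μ.restrict D) := by
  classical
  refine ⟨?_, by rw [hD.eLpNorm_orbitFiber hf]; exact hf.2⟩
  refine aestronglyMeasurable_of_tendsto_ae (atTop : Filter (Finset G))
    (f := fun s δ => ∑ g ∈ s, lp.single 2 g (f (g • δ))) (fun s => ?_) ?_
  · refine Finset.aestronglyMeasurable_fun_sum s fun g _ => ?_
    exact (lp.isometry_single g).continuous.comp_aestronglyMeasurable
      (hf.1.comp_quasiMeasurePreserving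
        (measurePreserving_smul g μ).quasiMeasurePreserving).restrict
  · filter_upwards [hD.ae_memℓp_orbit hf] with δ hδ
    rw [orbitFiber, dif_pos hδ]
    exact lp.hasSum_single ofNat_ne_top _

theorem orbitFiber_add_ae_eq {f f' : α → E} (hf : MemLp f 2 μ) (hf' : MemLp f' 2 μ) :
    orbitFiber G (f + f') =ᵐ[μ.restrict D] orbitFiber G f + orbitFiber G f' := by
  filter_upwards [hD.ae_memℓp_orbit hf, hD.ae_memℓp_orbit hf'] with δ h h'
  refine lp.ext ?_
  rw [Pi.add_apply, lp.coeFn_add, coe_orbitFiber_of_memℓp h, coe_orbitFiber_of_memℓp h',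
    coe_orbitFiber_of_memℓp (f := f + f') (h.add h')]
  rfl

theorem orbitFiber_smul_ae_eq (c : 𝕜) {f : α → E} (hf : MemLp f 2 μ) :
    orbitFiber G (c • f) =ᵐ[μ.restrict D] c • orbitFiber G f := by
  filter_upwards [hD.ae_memℓp_orbit hf] with δ h
  refine lp.ext ?_
  rw [Pi.smul_apply, lp.coeFn_smul, coe_orbitFiber_of_memℓp h,
    coe_orbitFiber_of_memℓp (f := c • f) (h.const_smul c)]
  rfl

end MeasureTheory.IsFundamentalDomain

variable (𝕜) in
noncomputable def fiberization (hD : IsFundamentalDomain G D μ) :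
    Lp E 2 μ →ₗᵢ[𝕜] Lp (lp (fun _ : G => E) 2) 2 (μ.restrict D) where
  toFun F := (hD.memLp_orbitFiber (Lp.memLp F)).toLp _
  map_add' F F' := by
    rw [← MemLp.toLp_add]
    refine MemLp.toLp_congr _ _ ?_
    exact (orbitFiber_ae_eq_of_ae_eq (Lp.coeFn_add F F')).filter_mono ae_restrict_le |>.trans
      (hD.orbitFiber_add_ae_eq (Lp.memLp F) (Lp.memLp F'))
  map_smul' c F := by
    rw [RingHom.id_apply, ← MemLp.toLp_const_smul]
    refine MemLp.toLp_congr _ _ ?_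
    exact (orbitFiber_ae_eq_of_ae_eq (Lp.coeFn_smul c F)).filter_mono ae_restrict_le |>.trans
      (hD.orbitFiber_smul_ae_eq c (Lp.memLp F))
  norm_map' F := by
    rw [LinearMap.coe_mk, AddHom.coe_mk, Lp.norm_toLp, hD.eLpNorm_orbitFiber (Lp.memLp F),
      Lp.norm_def]

variable (𝕜) in
theorem fiberization_ae_eq (hD : IsFundamentalDomain G D μ) {F : Lp E 2 μ} {f : α → E}
    (hFf : F =ᵐ[μ] f) : ∀ᵐ δ ∂μ.restrict D, ∀ g : G, fiberization 𝕜 hD F δ g = f (g • δ) := by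
  have hU : (fiberization 𝕜 hD F : α → lp (fun _ : G => E) 2) =ᵐ[μ.restrict D]
      orbitFiber G F := MemLp.coeFn_toLp (hD.memLp_orbitFiber (Lp.memLp F))
  filter_upwards [hU, hD.ae_memℓp_orbit (Lp.memLp F),
    ae_restrict_of_ae (ae_forall_smul (G := G) hFf)] with δ hU hδ hF g
  rw [hU, coe_orbitFiber_of_memℓp hδ]
  exact hF g

theorem fiberization_surjective (hDm : MeasurableSet D) (hDuniq : ∀ x : α, ∃! g : G, g • x ∈ D) :
    Function.Surjective (fiberization (E := E) 𝕜
      (.mk' hDm.nullMeasurableSet hDuniq : IsFundamentalDomain G D μ)) := by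
  set hD : IsFundamentalDomain G D μ := .mk' hDm.nullMeasurableSet hDuniq
  intro Φ
  choose ind hind huniq using fun x => hDuniq x
  set f : α → E := fun x => Φ (ind x • x) (ind x)⁻¹ with hf_def
  have hfD : ∀ δ ∈ D, ∀ g : G, f (g • δ) = Φ δ g := by
    intro δ hδ g
    have hg : ind (g • δ) = g⁻¹ := (huniq _ g⁻¹ (by simpa only [inv_smul_smul] using hδ)).symm
    simp only [hf_def, hg, inv_smul_smul, inv_inv]
  have hfm : AEStronglyMeasurable f μ := by
    have hcover : ⋃ g : G, (g • ·) ⁻¹' D = Set.univ :=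
      Set.eq_univ_of_forall fun x => Set.mem_iUnion.2 ⟨ind x, hind x⟩
    rw [← Measure.restrict_univ (μ := μ), ← hcover, aestronglyMeasurable_iUnion_iff]
    intro g
    have hpiece : StronglyMeasurable fun x => Φ (g • x) g⁻¹ :=
      (lp.evalCLM 𝕜 (fun _ : G => E) 2 g⁻¹).continuous.comp_stronglyMeasurable
        ((Lp.stronglyMeasurable Φ).comp_measurable (measurable_const_smul g))
    refine hpiece.aestronglyMeasurable.congr
      (ae_restrict_of_forall_mem (measurable_const_smul g hDm) fun x hx => ?_)
    simp only [hf_def, ← huniq x g hx]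
  have hφ : ∀ᵐ δ ∂μ.restrict D, ∀ g, Φ δ g = f (g • δ) :=
    (ae_restrict_mem hDm).mono fun δ hδ g => (hfD δ hδ g).symm
  have hfL : MemLp f 2 μ :=
    ⟨hfm, by rw [← hD.eLpNorm_eq_of_ae_apply_eq hfm hφ]; exact (Lp.memLp Φ).2⟩
  refine ⟨hfL.toLp f, Lp.ext ?_⟩
  filter_upwards [fiberization_ae_eq 𝕜 hD (MemLp.coeFn_toLp hfL), hφ] with δ h1 h2
  exact lp.ext (funext fun g => (h1 g).trans (h2 g).symm)

end Fiberization

theorem IsOpenMap.exists_isCompact_image_eq_univ {X Y : Type*} [TopologicalSpace X]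
    [TopologicalSpace Y] [WeaklyLocallyCompactSpace X] [CompactSpace Y] {f : X → Y}
    (hf : IsOpenMap f) (hsurj : Function.Surjective f) :
    ∃ K : Set X, IsCompact K ∧ f '' K = Set.univ := by
  choose U hU hxU using fun x : X => exists_compact_mem_nhds x
  have hcover : Set.univ ⊆ ⋃ x, f '' interior (U x) := fun y _ => by
    obtain ⟨x, rfl⟩ := hsurj y
    exact Set.mem_iUnion.2 ⟨x, Set.mem_image_of_mem f (mem_interior_iff_mem_nhds.2 (hxU x))⟩
  obtain ⟨t, ht⟩ := isCompact_univ.elim_finite_subcover _ (fun x => hf _ isOpen_interior) hcover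
  refine ⟨⋃ x ∈ t, U x, t.isCompact_biUnion fun x _ => hU x, Set.eq_univ_of_univ_subset ?_⟩
  rw [Set.image_iUnion₂]
  exact ht.trans (Set.iUnion₂_mono fun x _ => Set.image_mono interior_subset)

theorem QuotientAddGroup.exists_isCompact_add_eq_univ {G : Type*} [AddGroup G]
    [TopologicalSpace G] [IsTopologicalAddGroup G] [WeaklyLocallyCompactSpace G]
    (H : AddSubgroup G) [CompactSpace (G ⧸ H)] :
    ∃ K : Set G, IsCompact K ∧ K + (H : Set G) = Set.univ := by
  obtain ⟨K, hK, hKH⟩ :=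
    isOpenMap_coe.exists_isCompact_image_eq_univ (mk_surjective (s := H))
  refine ⟨K, hK, Set.eq_univ_of_forall fun x => ?_⟩
  obtain ⟨k, hk, hkx⟩ := hKH.symm ▸ Set.mem_univ (x : G ⧸ H)
  exact ⟨k, hk, -k + x, QuotientAddGroup.eq.1 hkx, add_neg_cancel_left k x⟩

theorem MeasurableSet.mul_of_countable {G : Type*} [Group G] [MeasurableSpace G]
    [MeasurableMul G] {s t : Set G} (hs : MeasurableSet s) (ht : t.Countable) :
    MeasurableSet (s * t) := by
  rw [← Set.iUnion_mul_right_image]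
  exact .biUnion ht fun a _ => (measurableEmbedding_mulRight a).measurableSet_image.2 hs

instance {X : Type*} [TopologicalSpace X] [SecondCountableTopology X] :
    SecondCountableTopology (Multiplicative X) :=
  ‹SecondCountableTopology X›

namespace PontryaginDual

open Real

variable {A : Type*} [Monoid A] [TopologicalSpace A]

def annihilator (S : Set A) : Subgroup (PontryaginDual A) where
  carrier := {γ | ∀ a ∈ S, γ a = 1}
  mul_mem' {γ γ'} hγ hγ' a ha := by
    change γ a * γ' a = 1
    rw [hγ a ha, hγ' a ha, one_mul]
  one_mem' _ _ := rfl
  inv_mem' {γ} hγ a ha := by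
    change (γ a)⁻¹ = 1
    rw [hγ a ha, inv_one]

theorem mem_annihilator {S : Set A} {γ : PontryaginDual A} :
    γ ∈ annihilator S ↔ ∀ a ∈ S, γ a = 1 :=
  Iff.rfl

theorem annihilator_anti {S T : Set A} (h : S ⊆ T) : annihilator T ≤ annihilator S :=
  fun _ hγ a ha => hγ a (h ha)

instance [LocallyCompactSpace A] [SecondCountableTopology A] :
    SecondCountableTopology (PontryaginDual A) :=
  (ContinuousMonoidHom.isEmbedding_toContinuousMap _ _).secondCountableTopology

theorem discreteTopology_annihilator {K S : Set A} (hK : IsCompact K) (hKS : K * S = Set.univ) :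
    DiscreteTopology (annihilator S) := by
  -- On `V ∩ annihilator S`, all powers of `γ a` lie in `γ '' K`, hence in the open right
  -- half-circle, which forces `γ a = 1`.
  let V : Set (PontryaginDual A) := {γ | Set.MapsTo γ K (Circle.centeredArc (π / 2))}
  have hVopen : IsOpen V := isOpen_induced
    (ContinuousMap.isOpen_setOfPred_mapsTo hK (Circle.isOpen_centeredArc (π / 2)))
  have hV : ((↑) : annihilator S → PontryaginDual A) ⁻¹' V = {1} := by
    ext ⟨γ, hγ⟩
    simp only [Set.mem_preimage, Set.mem_singleton_iff, Subgroup.mk_eq_one]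
    refine ⟨fun hγV => ?_, ?_⟩
    · refine PontryaginDual.ext fun a => ?_
      refine Circle.eq_one_of_forall_pow_mem_centeredArc_pi_div_two fun n _ => ?_
      obtain ⟨k, hk, s, hs, hks⟩ := Set.mem_mul.1 (hKS.symm ▸ Set.mem_univ (a ^ n))
      rw [← map_pow, ← hks, _root_.map_mul, hγ s hs, mul_one]
      exact hγV hk
    · rintro rfl _ _
      rw [Circle.mem_centeredArc (by linarith [pi_pos])]
      simp [pi_pos]
  exact discreteTopology_of_isOpen_singleton_one (hV ▸ hVopen.preimage continuous_subtype_val)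

theorem countable_annihilator [LocallyCompactSpace A] [SecondCountableTopology A] {K S : Set A}
    (hK : IsCompact K) (hKS : K * S = Set.univ) :
    (annihilator S : Set (PontryaginDual A)).Countable := by
  have := discreteTopology_annihilator hK hKS
  exact Set.countable_coe_iff.1 (TopologicalSpace.separableSpace_iff_countable.1 inferInstance)

theorem countable_annihilator_of_compactSpace_quotient {G : Type*} [AddGroup G]
    [TopologicalSpace G] [IsTopologicalAddGroup G] [LocallyCompactSpace G]
    [SecondCountableTopology G] (H : AddSubgroup G) [CompactSpace (G ⧸ H)] :
    (annihilator (ofAdd '' (H : Set G)) : Set (PontryaginDual (Multiplicative G))).Countable := by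
  obtain ⟨K, hK, hKH⟩ := QuotientAddGroup.exists_isCompact_add_eq_univ H
  refine countable_annihilator (hK.image continuous_ofAdd) (Set.eq_univ_of_forall fun a => ?_)
  obtain ⟨k, hk, h, hh, hkh⟩ := Set.mem_add.1 (hKH ▸ Set.mem_univ (toAdd a))
  refine Set.mem_mul.2 ⟨ofAdd k, ⟨k, hk, rfl⟩, ofAdd h, ⟨h, hh, rfl⟩, ?_⟩
  rw [← ofAdd_add, hkh, ofAdd_toAdd]

end PontryaginDual

section Transversals

variable {X : Type*} [CommGroup X]

theorem existsUnique_mem_mul_div_mem {H M : Subgroup X} (hMH : M ≤ H) {Ω N : Set X}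
    (hΩ : ∀ γ, ∃! ω, ω ∈ Ω ∧ γ / ω ∈ H) (hNH : N ⊆ H)
    (hN : ∀ l ∈ H, ∃! σ, σ ∈ N ∧ l / σ ∈ M) (γ : X) :
    ∃! δ, δ ∈ Ω * N ∧ γ / δ ∈ M := by
  obtain ⟨ω, ⟨hω, hγω⟩, hωuniq⟩ := hΩ γ
  obtain ⟨σ, ⟨hσ, hγωσ⟩, hσuniq⟩ := hN _ hγω
  refine ⟨ω * σ, ⟨Set.mul_mem_mul hω hσ, by rwa [← div_div]⟩, ?_⟩
  rintro _ ⟨⟨ω', hω', σ', hσ', rfl⟩, hγδ⟩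
  have hγω' := H.mul_mem (hMH hγδ) (hNH hσ')
  rw [← div_div, div_mul_cancel] at hγω'
  obtain rfl := hωuniq ω' ⟨hω', hγω'⟩
  rw [hσuniq σ' ⟨hσ', by rwa [div_div]⟩]

theorem existsUnique_smul_mem_of_existsUnique_div_mem {M : Subgroup X} {D : Set X}
    (h : ∀ γ, ∃! δ, δ ∈ D ∧ γ / δ ∈ M) (x : X) : ∃! m : M, m • x ∈ D := by
  obtain ⟨δ, ⟨hδ, hxδ⟩, huniq⟩ := h x
  refine ⟨⟨δ / x, by simpa using M.inv_mem hxδ⟩, by simpa [Subgroup.smul_def] using hδ, ?_⟩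
  rintro ⟨m, hm⟩ hmx
  have hδm := huniq (m * x) ⟨hmx, by simpa using M.inv_mem hm⟩
  ext
  simp [← hδm]

end Transversals

theorem fiberization_isometry_general
    {G : Type*} [AddCommGroup G] [TopologicalSpace G] [IsTopologicalAddGroup G]
    [LocallyCompactSpace G] [SecondCountableTopology G]
    [MeasurableSpace (PontryaginDual (Multiplicative G))]
    [BorelSpace (PontryaginDual (Multiplicative G))]
    (mΓ : Measure (PontryaginDual (Multiplicative G))) [mΓ.IsHaarMeasure]
    (H : AddSubgroup G)
    (hHcompact : CompactSpace (G ⧸ H))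
    (M : AddSubgroup G) (hHM : H ≤ M)
    (Hstar Mstar : Set (PontryaginDual (Multiplicative G)))
    (hHstar : Hstar = {γ | ∀ h ∈ H, γ (ofAdd h) = 1})
    (hMstar : Mstar = {γ | ∀ m ∈ M, γ (ofAdd m) = 1})
    (Ω : Set (PontryaginDual (Multiplicative G)))
    (hΩmeas : MeasurableSet Ω)
    (hΩ : ∀ γ : PontryaginDual (Multiplicative G), ∃! ω, ω ∈ Ω ∧ γ / ω ∈ Hstar)
    (N : Set (PontryaginDual (Multiplicative G))) (hNH : N ⊆ Hstar)
    (hN : ∀ lam ∈ Hstar, ∃! σ, σ ∈ N ∧ lam / σ ∈ Mstar)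
    (D : Set (PontryaginDual (Multiplicative G)))
    (hD : D = {γ : PontryaginDual (Multiplicative G) | ∃ ω ∈ Ω, ∃ σ ∈ N, γ = ω * σ}) :
    MeasurableSet D ∧
      (∀ γ : PontryaginDual (Multiplicative G), ∃! δ, δ ∈ D ∧ γ / δ ∈ Mstar) ∧
      ∃ U : Lp ℂ 2 mΓ →ₗᵢ[ℂ] Lp (lp (fun _ : ↥Mstar => ℂ) 2) 2 (mΓ.restrict D),
        Function.Surjective U ∧
        ∀ (F : Lp ℂ 2 mΓ) (f : PontryaginDual (Multiplicative G) → ℂ), Measurable f →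
          (F : PontryaginDual (Multiplicative G) → ℂ) =ᵐ[mΓ] f →
          ∀ᵐ δ ∂(mΓ.restrict D), ∀ m : ↥Mstar,
            (U F : PontryaginDual (Multiplicative G) → lp (fun _ : ↥Mstar => ℂ) 2) δ m
              = f (δ * ↑m) := by
  have := hHcompact
  have hHstar' : Hstar = PontryaginDual.annihilator (ofAdd '' (H : Set G)) := by
    simp [hHstar, Set.ext_iff, PontryaginDual.mem_annihilator]
  have hMstar' : Mstar = PontryaginDual.annihilator (ofAdd '' (M : Set G)) := by
    simp [hMstar, Set.ext_iff, PontryaginDual.mem_annihilator]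
  have hDΩN : D = Ω * N := by
    simp [hD, Set.ext_iff, Set.mem_mul, eq_comm]
  subst hHstar' hMstar' hDΩN
  have hHc := PontryaginDual.countable_annihilator_of_compactSpace_quotient H
  have hMH := PontryaginDual.annihilator_anti (Set.image_mono (f := ofAdd) hHM)
  have : Countable (PontryaginDual.annihilator (ofAdd '' (M : Set G))) :=
    (hHc.mono hMH).to_subtype
  have hsec := existsUnique_mem_mul_div_mem hMH hΩ hNH hN
  have hDm := hΩmeas.mul_of_countable (hHc.mono hNH)
  have hDuniq := existsUnique_smul_mem_of_existsUnique_div_mem hsec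
  have hDfund : IsFundamentalDomain _ (Ω * N) mΓ := .mk' hDm.nullMeasurableSet hDuniq
  -- Without the ascription the acting group is read off the goal as `↥Mstar`, i.e. as the
  -- set-coercion `↥↑(annihilator _)`, on which the `Subgroup` instances are not found.
  refine ⟨hDm, hsec, (fiberization ℂ hDfund : Lp ℂ 2 mΓ →ₗᵢ[ℂ] _),
    fiberization_surjective hDm hDuniq, fun F f _ hFf => ?_⟩
  filter_upwards [fiberization_ae_eq ℂ hDfund hFf] with δ hδ m
  rw [hδ m, Subgroup.smul_def, smul_eq_mul, mul_comm]

/-- with `Γ` the dual of `G`, `Ω` a measurable section of `Γ/H*`, `N` a section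
of `H*/M*` and `D = ⋃_{σ∈N} (Ω + σ)`: (a) `D` is a measurable section of `Γ/M*`; (b) the
fiberization map `F ↦ (δ ↦ (F(δ + m*))_{m* ∈ M*})` defines a surjective linear isometry from
`L²(Γ)` onto `L²(D, ℓ²(M*))`. -/
theorem fiberization_isometry
    {G : Type*} [AddCommGroup G] [TopologicalSpace G] [IsTopologicalAddGroup G]
    [LocallyCompactSpace G] [T2Space G] [SecondCountableTopology G]
    [MeasurableSpace (PontryaginDual (Multiplicative G))]
    [BorelSpace (PontryaginDual (Multiplicative G))]
    (mΓ : Measure (PontryaginDual (Multiplicative G))) [mΓ.IsHaarMeasure]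
    (H : AddSubgroup G) (hHcount : Countable H) (hHdiscrete : DiscreteTopology H)
    (hHcompact : CompactSpace (G ⧸ H))
    (M : AddSubgroup G) (hHM : H ≤ M) (hMclosed : IsClosed (M : Set G))
    (Hstar Mstar : Set (PontryaginDual (Multiplicative G)))
    (hHstar : Hstar = {γ | ∀ h ∈ H, γ (ofAdd h) = 1})
    (hMstar : Mstar = {γ | ∀ m ∈ M, γ (ofAdd m) = 1})
    (Ω : Set (PontryaginDual (Multiplicative G)))
    (hΩmeas : MeasurableSet Ω) (hΩfin : mΓ Ω < ⊤)
    (hΩ : ∀ γ : PontryaginDual (Multiplicative G), ∃! ω, ω ∈ Ω ∧ γ / ω ∈ Hstar)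
    (N : Set (PontryaginDual (Multiplicative G))) (hNH : N ⊆ Hstar)
    (hN : ∀ lam ∈ Hstar, ∃! σ, σ ∈ N ∧ lam / σ ∈ Mstar)
    (D : Set (PontryaginDual (Multiplicative G)))
    (hD : D = {γ : PontryaginDual (Multiplicative G) | ∃ ω ∈ Ω, ∃ σ ∈ N, γ = ω * σ}) :
    MeasurableSet D ∧
      (∀ γ : PontryaginDual (Multiplicative G), ∃! δ, δ ∈ D ∧ γ / δ ∈ Mstar) ∧
      ∃ U : Lp ℂ 2 mΓ →ₗᵢ[ℂ] Lp (lp (fun _ : ↥Mstar => ℂ) 2) 2 (mΓ.restrict D),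
        Function.Surjective U ∧
        ∀ (F : Lp ℂ 2 mΓ) (f : PontryaginDual (Multiplicative G) → ℂ), Measurable f →
          (F : PontryaginDual (Multiplicative G) → ℂ) =ᵐ[mΓ] f →
          ∀ᵐ δ ∂(mΓ.restrict D), ∀ m : ↥Mstar,
            (U F : PontryaginDual (Multiplicative G) → lp (fun _ : ↥Mstar => ℂ) 2) δ m
              = f (δ * ↑m) :=
  fiberization_isometry_general mΓ H hHcompact M hHM Hstar Mstar hHstar hMstar Ω hΩmeas hΩ N hNH hN
    D hD
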